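/- arXiv:1510.01899 — 5 statements merged into one kernel-verified Lean document; each statement's English description precedes it below -/
import Mathlib

section
/- Let T be an N×N Hermitian Toeplitz matrix with first column (t₀, t₁, …, t_{N−1}), let c = (t₀, t₁, …, t_{N−1}, 0, t̄_{N−1}, …, t̄₁) ∈ ℂ^{2N}, and let μ = F c where F is the 2N×2N DFT matrix with F_{m,n} = e^{−j 2π m n /(2N)}, 0 ≤ m,n < 2N (all μ entries are real). Then λ_max(T) ≤ ½(max over odd-indexed μ entries + max over even-indexed μ entries) and λ_min(T) ≥ ½(min over odd-indexed μ entries + min over even-indexed μ entries). -/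
/-!
Let `C` be the `2N × 2N` circulant matrix with first column `c`; both of its diagonal `N × N`
blocks are `T`, and the DFT diagonalises it: `F C = diag(μ) F` and `Fᴴ F = 2N`. Hence
`2N · y* C y = ∑ₘ μₘ |(F y)ₘ|²` with total weight `∑ₘ |(F y)ₘ|² = 2N ‖y‖²`.
For a unit eigenvector `v` of `T` with eigenvalue `λ`, the quadratic forms of `C` at `(v, v)` and
`(v, -v)` add up to `4λ`, since the off-diagonal blocks contribute with opposite signs. As
`F (v, ±v)` vanishes at the odd (resp. even) frequencies, the first form lies between `2 min` and
`2 max` of the even-indexed `μ`, the second likewise for the odd-indexed ones.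
-/

open Matrix Complex

lemma geom_sum_eq_zero_of_pow_eq_one {K : Type*} [Field K] {r : K} {n : ℕ}
    (h : r ^ n = 1) (hr : r ≠ 1) : ∑ i ∈ Finset.range n, r ^ i = 0 := by
  rw [geom_sum_eq hr, h, sub_self, zero_div]

lemma sum_mul_le_iSup_mul_sum {ι κ : Type*} [Fintype ι] [Finite κ] (f w : ι → ℝ)
    (g : κ → ι) (hw : ∀ i, 0 ≤ w i) (hg : ∀ i ∉ Set.range g, w i = 0) :
    ∑ i, f i * w i ≤ (⨆ p, f (g p)) * ∑ i, w i := by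
  rw [Finset.mul_sum]
  refine Finset.sum_le_sum fun i _ => ?_
  by_cases hi : i ∈ Set.range g
  · obtain ⟨p, rfl⟩ := hi
    exact mul_le_mul_of_nonneg_right
      (le_ciSup (f := fun p => f (g p)) (Set.finite_range _).bddAbove p) (hw _)
  · simp [hg i hi]

lemma iInf_mul_sum_le_sum_mul {ι κ : Type*} [Fintype ι] [Finite κ] (f w : ι → ℝ)
    (g : κ → ι) (hw : ∀ i, 0 ≤ w i) (hg : ∀ i ∉ Set.range g, w i = 0) :
    (⨅ p, f (g p)) * ∑ i, w i ≤ ∑ i, f i * w i := by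
  rw [Finset.mul_sum]
  refine Finset.sum_le_sum fun i _ => ?_
  by_cases hi : i ∈ Set.range g
  · obtain ⟨p, rfl⟩ := hi
    exact mul_le_mul_of_nonneg_right
      (ciInf_le (f := fun p => f (g p)) (Set.finite_range _).bddBelow p) (hw _)
  · simp [hg i hi]

lemma star_dotProduct_mulVec_comp_equiv_symm {ι κ α : Type*} [Fintype ι] [Fintype κ]
    [CommSemiring α] [StarRing α] (A : Matrix ι ι α) (e : κ ≃ ι) (x : κ → α) :
    star (x ∘ e.symm) ⬝ᵥ A *ᵥ (x ∘ e.symm) = star x ⬝ᵥ A.submatrix e e *ᵥ x := by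
  rw [submatrix_mulVec_equiv, ← comp_equiv_symm_dotProduct]
  rfl

lemma star_dotProduct_mulVec_sumElim_add_neg {ι α : Type*} [Fintype ι] [CommRing α]
    [StarRing α] (A : Matrix (ι ⊕ ι) (ι ⊕ ι) α) (v : ι → α) :
    star (Sum.elim v v) ⬝ᵥ A *ᵥ Sum.elim v v +
        star (Sum.elim v (-v)) ⬝ᵥ A *ᵥ Sum.elim v (-v) =
      2 * (star v ⬝ᵥ A.toBlocks₁₁ *ᵥ v + star v ⬝ᵥ A.toBlocks₂₂ *ᵥ v) := by
  conv_lhs => rw [← fromBlocks_toBlocks A]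
  simp only [Function.star_sumElim, fromBlocks_mulVec, sumElim_dotProduct_sumElim,
    Sum.elim_comp_inl, Sum.elim_comp_inr, dotProduct_add, mulVec_neg, star_neg, neg_dotProduct,
    dotProduct_neg]
  ring

noncomputable def fourierMatrix (n : ℕ) (ζ : ℂ) : Matrix (Fin n) (Fin n) ℂ :=
  of fun m k => ζ ^ ((m : ℕ) * (k : ℕ))

namespace fourierMatrix

variable {n : ℕ} {ζ : ℂ}

lemma apply (m k : Fin n) : fourierMatrix n ζ m k = ζ ^ ((m : ℕ) * (k : ℕ)) := rfl

lemma apply_add (hζ : ζ ^ n = 1) (m k l : Fin n) :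
    fourierMatrix n ζ m (k + l) = fourierMatrix n ζ m k * fourierMatrix n ζ m l := by
  have hm : (ζ ^ (m : ℕ)) ^ n = 1 := by rw [← pow_mul, mul_comm, pow_mul, hζ, one_pow]
  simp only [apply, pow_mul]
  rw [Fin.val_add, ← pow_eq_pow_mod _ hm, pow_add]

theorem mul_circulant [NeZero n] (hζ : ζ ^ n = 1) (d : Fin n → ℂ) :
    fourierMatrix n ζ * circulant d =
      diagonal (fourierMatrix n ζ *ᵥ d) * fourierMatrix n ζ := by
  ext m j
  rw [mul_apply, diagonal_mul, mulVec, dotProduct, Finset.sum_mul,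
    ← Equiv.sum_comp (Equiv.addRight j)]
  refine Finset.sum_congr rfl fun k _ => ?_
  rw [Equiv.coe_addRight, circulant_apply, add_sub_cancel_right, apply_add hζ]
  ring

theorem conjTranspose_mul_self [NeZero n] (hζ : IsPrimitiveRoot ζ n) :
    (fourierMatrix n ζ)ᴴ * fourierMatrix n ζ = (n : ℂ) • 1 := by
  have hnorm (m k : Fin n) : star (fourierMatrix n ζ m k) * fourierMatrix n ζ m k = 1 := by
    rw [apply, star_def, ← normSq_eq_conj_mul_self, normSq_eq_norm_sq, norm_pow,
      hζ.norm'_eq_one (NeZero.ne n)]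
    simp
  ext j k
  have hsum : ((fourierMatrix n ζ)ᴴ * fourierMatrix n ζ) j k =
      ∑ m ∈ Finset.range n, (ζ ^ ((k - j : Fin n) : ℕ)) ^ m := by
    rw [mul_apply, ← Fin.sum_univ_eq_sum_range]
    refine Finset.sum_congr rfl fun m _ => ?_
    rw [conjTranspose_apply, ← add_sub_cancel j k, apply_add hζ.pow_eq_one, ← mul_assoc, hnorm,
      one_mul, add_sub_cancel, apply, ← pow_mul, mul_comm]
  rw [hsum, Matrix.smul_apply, one_apply]
  split_ifs with hjk
  · simp [hjk]
  · rw [smul_zero]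
    refine geom_sum_eq_zero_of_pow_eq_one ?_ ?_
    · rw [← pow_mul, mul_comm, pow_mul, hζ.pow_eq_one, one_pow]
    · refine hζ.pow_ne_one_of_pos_of_lt ?_ (Fin.is_lt _)
      rwa [Ne, Fin.val_eq_zero_iff, sub_eq_zero, eq_comm]

theorem sum_mulVec_mul_normSq [NeZero n] (hζ : IsPrimitiveRoot ζ n) (d x : Fin n → ℂ) :
    ∑ m, (fourierMatrix n ζ *ᵥ d) m * normSq ((fourierMatrix n ζ *ᵥ x) m) =
      n * (star x ⬝ᵥ circulant d *ᵥ x) :=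
  calc ∑ m, (fourierMatrix n ζ *ᵥ d) m * normSq ((fourierMatrix n ζ *ᵥ x) m)
      = star (fourierMatrix n ζ *ᵥ x) ⬝ᵥ
          (diagonal (fourierMatrix n ζ *ᵥ d) *ᵥ fourierMatrix n ζ *ᵥ x) := by
        refine Finset.sum_congr rfl fun m _ => ?_
        rw [mulVec_diagonal, normSq_eq_conj_mul_self, Pi.star_apply, star_def]
        ring
    _ = star x ⬝ᵥ ((fourierMatrix n ζ)ᴴ * fourierMatrix n ζ * circulant d) *ᵥ x := by
        rw [star_mulVec, ← dotProduct_mulVec, mulVec_mulVec, mulVec_mulVec,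
          Matrix.mul_assoc, ← mul_circulant hζ.pow_eq_one, Matrix.mul_assoc]
    _ = n * (star x ⬝ᵥ circulant d *ᵥ x) := by
        rw [conjTranspose_mul_self hζ, smul_mul, Matrix.one_mul, smul_mulVec, dotProduct_smul,
          smul_eq_mul]

theorem sum_normSq_mulVec [NeZero n] (hζ : IsPrimitiveRoot ζ n) (x : Fin n → ℂ) :
    ∑ m, normSq ((fourierMatrix n ζ *ᵥ x) m) = n * ∑ k, normSq (x k) := by
  have h := sum_mulVec_mul_normSq hζ (Pi.single 0 1) x
  have hδ : fourierMatrix n ζ *ᵥ Pi.single 0 1 = 1 := by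
    ext m
    simp [apply]
  have hx : star x ⬝ᵥ x = ∑ k, (normSq (x k) : ℂ) :=
    Finset.sum_congr rfl fun k _ => by rw [normSq_eq_conj_mul_self]; rfl
  simp only [hδ, circulant_single_one, one_mulVec, Pi.one_apply, one_mul, hx] at h
  exact_mod_cast h

theorem re_sum_mulVec_mul_normSq [NeZero n] (hζ : IsPrimitiveRoot ζ n) (d x : Fin n → ℂ) :
    ∑ m, ((fourierMatrix n ζ *ᵥ d) m).re * normSq ((fourierMatrix n ζ *ᵥ x) m) =
      n * (star x ⬝ᵥ circulant d *ᵥ x).re := by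
  have h := congrArg re (sum_mulVec_mul_normSq hζ d x)
  simpa only [re_sum, mul_re, ofReal_re, ofReal_im, natCast_re, natCast_im, mul_zero, zero_mul,
    sub_zero] using h

theorem re_star_dotProduct_circulant_mulVec_mem_Icc [NeZero n] {κ : Type*} [Finite κ]
    (hζ : IsPrimitiveRoot ζ n) (d x : Fin n → ℂ) (g : κ → Fin n)
    (hx : ∀ m ∉ Set.range g, (fourierMatrix n ζ *ᵥ x) m = 0) :
    (star x ⬝ᵥ circulant d *ᵥ x).re ∈ Set.Icc
      ((⨅ p, ((fourierMatrix n ζ *ᵥ d) (g p)).re) * ∑ k, normSq (x k))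
      ((⨆ p, ((fourierMatrix n ζ *ᵥ d) (g p)).re) * ∑ k, normSq (x k)) := by
  have hn : (0 : ℝ) < n := by exact_mod_cast Nat.pos_of_neZero n
  have hw : ∀ m ∉ Set.range g, normSq ((fourierMatrix n ζ *ᵥ x) m) = 0 := fun m hm => by
    rw [hx m hm, map_zero]
  have hlow := iInf_mul_sum_le_sum_mul (fun m => ((fourierMatrix n ζ *ᵥ d) m).re) _ g
    (fun _ => normSq_nonneg _) hw
  have hup := sum_mul_le_iSup_mul_sum (fun m => ((fourierMatrix n ζ *ᵥ d) m).re) _ g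
    (fun _ => normSq_nonneg _) hw
  rw [re_sum_mulVec_mul_normSq hζ, sum_normSq_mulVec hζ] at hlow hup
  constructor
  · refine le_of_mul_le_mul_left ?_ hn
    linarith
  · refine le_of_mul_le_mul_left ?_ hn
    linarith

end fourierMatrix

def finSumFinEquivTwoMul (N : ℕ) : Fin N ⊕ Fin N ≃ Fin (2 * N) :=
  finSumFinEquiv.trans (finCongr (two_mul N).symm)

@[simp]
lemma finSumFinEquivTwoMul_inl_val {N : ℕ} (p : Fin N) :
    (finSumFinEquivTwoMul N (Sum.inl p) : ℕ) = p := rfl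

@[simp]
lemma finSumFinEquivTwoMul_inr_val {N : ℕ} (p : Fin N) :
    (finSumFinEquivTwoMul N (Sum.inr p) : ℕ) = N + p := rfl

lemma finSumFinEquivTwoMul_inr_sub_inr {N : ℕ} (p q : Fin N) :
    finSumFinEquivTwoMul N (Sum.inr p) - finSumFinEquivTwoMul N (Sum.inr q) =
      finSumFinEquivTwoMul N (Sum.inl p) - finSumFinEquivTwoMul N (Sum.inl q) := by
  ext
  simp only [Fin.val_sub, finSumFinEquivTwoMul_inl_val, finSumFinEquivTwoMul_inr_val]
  congr 1
  omega

namespace fourierMatrix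

variable {N : ℕ} {ζ : ℂ}

lemma apply_inr (hζ : IsPrimitiveRoot ζ (2 * N)) (m : Fin (2 * N)) (p : Fin N) :
    fourierMatrix (2 * N) ζ m (finSumFinEquivTwoMul N (Sum.inr p)) =
      (-1) ^ (m : ℕ) * fourierMatrix (2 * N) ζ m (finSumFinEquivTwoMul N (Sum.inl p)) := by
  have hN : N ≠ 0 := (Fin.pos p).ne'
  have hhalf : ζ ^ N = -1 := by
    refine IsPrimitiveRoot.eq_neg_one_of_two_right ?_
    simpa [hN] using hζ.pow_of_dvd hN (dvd_mul_left N 2)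
  simp only [apply, finSumFinEquivTwoMul_inr_val, finSumFinEquivTwoMul_inl_val]
  rw [mul_add, pow_add, mul_comm (m : ℕ) N, pow_mul, hhalf]

lemma mulVec_sumElim (hζ : IsPrimitiveRoot ζ (2 * N)) (v w : Fin N → ℂ) (m : Fin (2 * N)) :
    (fourierMatrix (2 * N) ζ *ᵥ (Sum.elim v w ∘ (finSumFinEquivTwoMul N).symm)) m =
      ∑ p, fourierMatrix (2 * N) ζ m (finSumFinEquivTwoMul N (Sum.inl p)) *
        (v p + (-1) ^ (m : ℕ) * w p) := by
  rw [mulVec, dotProduct, ← Equiv.sum_comp (finSumFinEquivTwoMul N), Fintype.sum_sum_type,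
    ← Finset.sum_add_distrib]
  refine Finset.sum_congr rfl fun p _ => ?_
  simp only [Function.comp_apply, Equiv.symm_apply_apply, Sum.elim_inl, Sum.elim_inr,
    apply_inr hζ]
  ring

end fourierMatrix

lemma odd_of_notMem_range {N : ℕ} {ev : Fin N → Fin (2 * N)} (hev : ∀ p, (ev p : ℕ) = 2 * p)
    {m : Fin (2 * N)} (hm : m ∉ Set.range ev) : Odd (m : ℕ) := by
  by_contra h
  obtain ⟨r, hr⟩ := Nat.not_odd_iff_even.mp h
  exact hm ⟨⟨r, by omega⟩, Fin.ext (by rw [hev, Fin.val_mk]; omega)⟩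

lemma even_of_notMem_range {N : ℕ} {od : Fin N → Fin (2 * N)}
    (hod : ∀ p, (od p : ℕ) = 2 * p + 1) {m : Fin (2 * N)} (hm : m ∉ Set.range od) :
    Even (m : ℕ) := by
  by_contra h
  obtain ⟨r, hr⟩ := Nat.not_even_iff_odd.mp h
  exact hm ⟨⟨r, by omega⟩, Fin.ext (by rw [hod, Fin.val_mk]; omega)⟩

lemma sum_normSq_sumElim_comp {N : ℕ} (v w : Fin N → ℂ) :
    ∑ k, normSq ((Sum.elim v w ∘ (finSumFinEquivTwoMul N).symm) k) =
      ∑ p, normSq (v p) + ∑ p, normSq (w p) := by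
  rw [← Equiv.sum_comp (finSumFinEquivTwoMul N), Fintype.sum_sum_type]
  simp

theorem Matrix.IsHermitian.eigenvalues_mem_Icc_of_circulant_blocks {N : ℕ}
    {A : Matrix (Fin N) (Fin N) ℂ} (hA : A.IsHermitian) {ζ : ℂ}
    (hζ : IsPrimitiveRoot ζ (2 * N)) (c : Fin (2 * N) → ℂ)
    (h₁₁ : ((circulant c).submatrix (finSumFinEquivTwoMul N)
      (finSumFinEquivTwoMul N)).toBlocks₁₁ = A)
    (h₂₂ : ((circulant c).submatrix (finSumFinEquivTwoMul N)
      (finSumFinEquivTwoMul N)).toBlocks₂₂ = A)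
    {ev od : Fin N → Fin (2 * N)} (hev : ∀ p, (ev p : ℕ) = 2 * p)
    (hod : ∀ p, (od p : ℕ) = 2 * p + 1) (i : Fin N) :
    hA.eigenvalues i ∈ Set.Icc
      ((1 / 2) * ((⨅ p, ((fourierMatrix (2 * N) ζ *ᵥ c) (ev p)).re) +
        (⨅ p, ((fourierMatrix (2 * N) ζ *ᵥ c) (od p)).re)))
      ((1 / 2) * ((⨆ p, ((fourierMatrix (2 * N) ζ *ᵥ c) (ev p)).re) +
        (⨆ p, ((fourierMatrix (2 * N) ζ *ᵥ c) (od p)).re))) := by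
  have : NeZero (2 * N) := ⟨by have := i.pos; omega⟩
  set e := finSumFinEquivTwoMul N
  set v : Fin N → ℂ := ⇑(hA.eigenvectorBasis i)
  have hv : ∑ p, normSq (v p) = 1 := by
    have h := EuclideanSpace.norm_sq_eq (hA.eigenvectorBasis i)
    rw [hA.eigenvectorBasis.orthonormal.1 i, one_pow] at h
    simpa [v, normSq_eq_norm_sq] using h.symm
  have hforms :
      (star (Sum.elim v v ∘ e.symm) ⬝ᵥ circulant c *ᵥ (Sum.elim v v ∘ e.symm)).re +
        (star (Sum.elim v (-v) ∘ e.symm) ⬝ᵥ circulant c *ᵥ (Sum.elim v (-v) ∘ e.symm)).re =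
          4 * hA.eigenvalues i := by
    rw [← add_re, star_dotProduct_mulVec_comp_equiv_symm,
      star_dotProduct_mulVec_comp_equiv_symm, star_dotProduct_mulVec_sumElim_add_neg, h₁₁, h₂₂,
      hA.eigenvalues_eq i]
    simp only [mul_re, add_re, re_ofNat, im_ofNat, zero_mul, sub_zero, RCLike.re_to_complex]
    ring
  have hplus := fourierMatrix.re_star_dotProduct_circulant_mulVec_mem_Icc hζ c
    (Sum.elim v v ∘ e.symm) _ fun m hm => by
      rw [fourierMatrix.mulVec_sumElim hζ, (odd_of_notMem_range hev hm).neg_one_pow]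
      simp
  have hminus := fourierMatrix.re_star_dotProduct_circulant_mulVec_mem_Icc hζ c
    (Sum.elim v (-v) ∘ e.symm) _ fun m hm => by
      rw [fourierMatrix.mulVec_sumElim hζ, (even_of_notMem_range hod hm).neg_one_pow]
      simp
  rw [sum_normSq_sumElim_comp, hv] at hplus
  rw [sum_normSq_sumElim_comp] at hminus
  simp only [Pi.neg_apply, normSq_neg, hv] at hminus
  constructor <;> linarith [hplus.1, hplus.2, hminus.1, hminus.2]

lemma apply_finSumFinEquivTwoMul_inl_sub {N : ℕ} {t : ℤ → ℂ} {c : Fin (2 * N) → ℂ}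
    (ht : ∀ k : ℤ, t (-k) = star (t k))
    (hc : ∀ m : Fin (2 * N), c m = if (m : ℕ) < N then t (m : ℕ)
      else if (m : ℕ) = N then 0 else star (t ((2 * N : ℤ) - (m : ℕ))))
    (p q : Fin N) :
    c (finSumFinEquivTwoMul N (Sum.inl p) - finSumFinEquivTwoMul N (Sum.inl q)) =
      t ((p : ℤ) - q) := by
  rw [hc]
  rcases le_or_gt q p with hqp | hpq
  · have hval : ((finSumFinEquivTwoMul N (Sum.inl p) - finSumFinEquivTwoMul N (Sum.inl q) :
        Fin (2 * N)) : ℕ) = p - q := Fin.sub_val_of_le hqp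
    rw [hval, if_pos (by omega), Nat.cast_sub (by simpa using hqp)]
  · have hval : ((finSumFinEquivTwoMul N (Sum.inl p) - finSumFinEquivTwoMul N (Sum.inl q) :
        Fin (2 * N)) : ℕ) = 2 * N + p - q := Fin.coe_sub_iff_lt.mpr hpq
    rw [hval, if_neg (by omega), if_neg (by omega), ← ht]
    congr 1
    have : (q : ℕ) ≤ 2 * N + p := by omega
    push_cast [Nat.cast_sub this]
    ring

/-- Eigenvalue bounds for Hermitian Toeplitz matrices via the 2N-point DFT. -/
theorem hermitian_toeplitz_eig_bounds (N : ℕ) (hN : 0 < N)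
    (t : ℤ → ℂ) (ht : ∀ k : ℤ, t (-k) = star (t k))
    (T : Matrix (Fin N) (Fin N) ℂ) (hT : ∀ i j : Fin N, T i j = t ((i : ℤ) - (j : ℤ)))
    (hTh : T.IsHermitian)
    (F : Matrix (Fin (2 * N)) (Fin (2 * N)) ℂ)
    (hF : ∀ m n : Fin (2 * N),
      F m n = Complex.exp (-Complex.I * (2 * Real.pi * (m : ℕ) * (n : ℕ) / (2 * N))))
    (c : Fin (2 * N) → ℂ)
    (hc : ∀ m : Fin (2 * N),
      c m = if (m : ℕ) < N then t (m : ℕ)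
            else if (m : ℕ) = N then 0
            else star (t ((2 * N : ℤ) - (m : ℕ))))
    (μ : Fin (2 * N) → ℂ) (hμ : μ = F *ᵥ c) :
    have : Nonempty (Fin N) := ⟨⟨0, hN⟩⟩
    (∀ i : Fin N, hTh.eigenvalues i ≤
        (1 / 2) * ((⨆ p : Fin N, (μ ⟨2 * (p : ℕ), by omega⟩).re) +
          (⨆ p : Fin N, (μ ⟨2 * (p : ℕ) + 1, by omega⟩).re))) ∧
    (∀ i : Fin N, (1 / 2) * ((⨅ p : Fin N, (μ ⟨2 * (p : ℕ), by omega⟩).re) +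
          (⨅ p : Fin N, (μ ⟨2 * (p : ℕ) + 1, by omega⟩).re)) ≤ hTh.eigenvalues i) := by
  intro _
  have hζ : IsPrimitiveRoot (exp (2 * Real.pi * I / (2 * N : ℕ)))⁻¹ (2 * N) :=
    (isPrimitiveRoot_exp (2 * N) (by omega)).inv
  have hF' : F = fourierMatrix (2 * N) (exp (2 * Real.pi * I / (2 * N : ℕ)))⁻¹ := by
    ext m k
    rw [hF, fourierMatrix.apply, ← Complex.exp_neg, ← Complex.exp_nat_mul]
    congr 1
    push_cast
    ring
  have h₁₁ : ((circulant c).submatrix (finSumFinEquivTwoMul N)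
      (finSumFinEquivTwoMul N)).toBlocks₁₁ = T := by
    ext p q
    rw [toBlocks₁₁, of_apply, submatrix_apply, circulant_apply,
      apply_finSumFinEquivTwoMul_inl_sub ht hc, hT]
  have h₂₂ : ((circulant c).submatrix (finSumFinEquivTwoMul N)
      (finSumFinEquivTwoMul N)).toBlocks₂₂ = T := by
    ext p q
    rw [toBlocks₂₂, of_apply, submatrix_apply, circulant_apply,
      finSumFinEquivTwoMul_inr_sub_inr, apply_finSumFinEquivTwoMul_inl_sub ht hc, hT]
  have hbounds := hTh.eigenvalues_mem_Icc_of_circulant_blocks hζ c h₁₁ h₂₂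
    (ev := fun p => ⟨2 * p, by omega⟩) (od := fun p => ⟨2 * p + 1, by omega⟩)
    (fun _ => rfl) (fun _ => rfl)
  subst hμ hF'
  exact ⟨fun i => (hbounds i).2, fun i => (hbounds i).1⟩
end

section
/- Let {x_m}_{m=1}^M be complex sequences of length N, and define z ∈ ℂ^{M(2N−1)} by concatenating x₁, then N−1 zeros, then x₂, N−1 zeros, …, x_M, N−1 zeros. Then for every lag k with 0 ≤ k ≤ N−1, the aperiodic autocorrelation of z satisfies r_z(k) = Σ_{m=1}^M r_{m,m}(k), the sum of the individual autocorrelations of the x_m at lag k. -/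
/-- Aperiodic autocorrelation of a length-`L` sequence `y` at nonnegative lag `k` (0-indexed). -/
noncomputable def acorr (L : ℕ) (y : ℕ → ℂ) (k : ℕ) : ℂ :=
  ∑ n ∈ Finset.range (L - k), y (n + k) * (starRingEnd ℂ) (y n)

private lemma sum_range_mul' (f : ℕ → ℂ) (M P : ℕ) :
    ∑ n ∈ Finset.range (M * P), f n
      = ∑ q ∈ Finset.range M, ∑ j ∈ Finset.range P, f (q * P + j) := by
  induction M with
  | zero => simp
  | succ m ih =>
    rw [Finset.sum_range_succ, ← ih, Nat.succ_mul, Finset.sum_range_add]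

theorem zero_padded_concat_autocorrelation (M N : ℕ) (hN : 0 < N) (hM : 0 < M)
    (x : ℕ → ℕ → ℂ) (z : ℕ → ℂ)
    (hz : ∀ i, z i = if i % (2 * N - 1) < N ∧ i / (2 * N - 1) < M
        then x (i / (2 * N - 1)) (i % (2 * N - 1)) else 0) :
    ∀ k ≤ N - 1,
      acorr (M * (2 * N - 1)) z k = ∑ m ∈ Finset.range M, acorr N (x m) k := by
  intro k hk
  set P := 2 * N - 1 with hP
  have hPpos : 0 < P := by omega
  have hkN : k ≤ N - 1 := hk
  -- step 1: extend sum to range (M*P)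
  have hzero_hi : ∀ i, M * P ≤ i → z i = 0 := by
    intro i hi
    rw [hz]
    have : ¬ i / P < M := by
      rw [not_lt, Nat.le_div_iff_mul_le hPpos]; omega
    simp [this]
  have step1 : acorr (M * P) z k
      = ∑ n ∈ Finset.range (M * P), z (n + k) * (starRingEnd ℂ) (z n) := by
    unfold acorr
    apply Finset.sum_subset
    · exact Finset.range_subset_range.2 (Nat.sub_le _ _)
    · intro n hn hn'
      simp only [Finset.mem_range, not_lt] at hn hn'
      rw [hzero_hi (n + k) (by omega), zero_mul]
  rw [step1, sum_range_mul' _ M P]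
  apply Finset.sum_congr rfl
  intro q hq
  rw [Finset.mem_range] at hq
  -- compute z on a block
  have hmod : ∀ j, j < P → (q * P + j) % P = j := by
    intro j hj
    rw [Nat.mul_add_mod', Nat.mod_eq_of_lt hj]
  have hdiv : ∀ j, j < P → (q * P + j) / P = q := by
    intro j hj
    rw [mul_comm, Nat.mul_add_div hPpos, Nat.div_eq_of_lt hj, add_zero]
  have hzval : ∀ j, j < P → z (q * P + j) = if j < N then x q j else 0 := by
    intro j hj
    rw [hz, hmod j hj, hdiv j hj]
    by_cases h : j < N <;> simp [h, hq]
  unfold acorr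
  refine ((Finset.sum_subset (Finset.range_subset_range.2 (show N - k ≤ P by omega))
      ?_).symm).trans (Finset.sum_congr rfl ?_)
  · intro j hj hj'
    rw [Finset.mem_range] at hj hj'
    push_neg at hj'
    by_cases hjN : j < N
    · have h1 : j + k < P := by omega
      have : z (q * P + j + k) = 0 := by
        rw [show q * P + j + k = q * P + (j + k) by ring, hzval _ h1]
        simp; omega
      rw [this, zero_mul]
    · have : z (q * P + j) = 0 := by rw [hzval j hj]; simp; omega
      rw [this, map_zero, mul_zero]
  · intro j hj
    rw [Finset.mem_range] at hj
    have h1 : j + k < N := by omega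
    rw [show q * P + j + k = q * P + (j + k) by ring,
      hzval _ (by omega), hzval j (by omega)]
    simp [h1, show j < N by omega]
end

section
/- Let {x_m}_{m=1}^M be sequences of length N with z their zero-padded concatenation of length L = M(2N−1). Then the set {x_m} is complementary (Σ_m r_{m,m}(k) = 0 for all 1 ≤ |k| ≤ N−1) if and only if r_z(k) = 0 for all 1 ≤ k ≤ N−1. -/
/-- Aperiodic autocorrelation of a length-`L` sequence `y` at an integer lag `k` (0-indexed):
`r(k) = ∑_n y(n+k) * conj(y(n))` over all `n` with both `n` and `n+k` in `[0, L)`. -/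
noncomputable def acorrZ (L : ℕ) (y : ℕ → ℂ) (k : ℤ) : ℂ :=
  ∑ n ∈ Finset.range L,
    if h : 0 ≤ (n : ℤ) + k ∧ (n : ℤ) + k < L then
      y ((n : ℤ) + k).toNat * (starRingEnd ℂ) (y n) else 0

lemma acorrZ_natCast (L : ℕ) (y : ℕ → ℂ) (k : ℕ) : acorrZ L y (k : ℤ) = acorr L y k := by
  unfold acorrZ acorr
  rw [← Finset.sum_subset (Finset.range_subset_range.2 (Nat.sub_le L k))
    (by
      intro n hn hn'
      rw [Finset.mem_range] at hn
      rw [Finset.mem_range] at hn'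
      rw [dif_neg]
      push_cast
      omega)]
  apply Finset.sum_congr rfl
  intro n hn
  rw [Finset.mem_range] at hn
  rw [dif_pos ⟨by positivity, by push_cast; omega⟩,
    show ((n : ℤ) + k).toNat = n + k by omega]

lemma acorrZ_neg_natCast (L : ℕ) (y : ℕ → ℂ) (k : ℕ) (hk : k ≤ L) :
    acorrZ L y (-(k : ℤ)) = (starRingEnd ℂ) (acorr L y k) := by
  unfold acorrZ acorr
  rw [map_sum]
  have h1 : ∀ n ∈ Finset.range L,
      (if h : 0 ≤ (n : ℤ) + -(k : ℤ) ∧ (n : ℤ) + -(k : ℤ) < L then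
        y ((n : ℤ) + -(k : ℤ)).toNat * (starRingEnd ℂ) (y n) else 0)
      = if k ≤ n then y (n - k) * (starRingEnd ℂ) (y n) else 0 := by
    intro n hn
    rw [Finset.mem_range] at hn
    by_cases h : k ≤ n
    · rw [dif_pos ⟨by omega, by push_cast; omega⟩, if_pos h]
      congr 2
      omega
    · rw [dif_neg (by push_cast; omega), if_neg h]
  rw [Finset.sum_congr rfl h1, ← Finset.sum_filter]
  have h2 : (Finset.range L).filter (fun n => k ≤ n) = Finset.Ico k L := by
    ext n
    simp [Finset.mem_filter, Finset.mem_range, Finset.mem_Ico]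
    omega
  rw [h2, Finset.sum_Ico_eq_sum_range]
  apply Finset.sum_congr rfl
  intro n hn
  rw [map_mul, RingHomInvPair.comp_apply_eq₂]
  rw [show k + n - k = n by omega, show n + k = k + n by omega]
  ring

lemma acorr_z_eq_sum (M N : ℕ) (hN : 0 < N) (hM : 0 < M)
    (x : ℕ → ℕ → ℂ) (z : ℕ → ℂ)
    (hz : ∀ i, z i = if i % (2 * N - 1) < N ∧ i / (2 * N - 1) < M
        then x (i / (2 * N - 1)) (i % (2 * N - 1)) else 0)
    (k : ℕ) (hk1 : 1 ≤ k) (hk2 : k ≤ N - 1) :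
    acorr (M * (2 * N - 1)) z k = ∑ m ∈ Finset.range M, acorr N (x m) k := by
  set B := 2 * N - 1 with hB
  have hBpos : 0 < B := by omega
  have hdm : ∀ m j, j < B → (m * B + j) / B = m ∧ (m * B + j) % B = j := by
    intro m j hj
    constructor
    · exact Nat.div_eq_of_lt_le (by omega) (by rw [add_mul]; omega)
    · rw [show m * B + j = j + B * m by ring, Nat.add_mul_mod_self_left,
        Nat.mod_eq_of_lt hj]
  -- z at an in-block index
  have hz1 : ∀ m j, m < M → j < N → z (m * B + j) = x m j := by
    intro m j hm hj
    rw [hz, if_pos]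
    · rw [(hdm m j (by omega)).1, (hdm m j (by omega)).2]
    · rw [(hdm m j (by omega)).1, (hdm m j (by omega)).2]
      exact ⟨hj, hm⟩
  have hz0 : ∀ m j, N ≤ j → j < B → z (m * B + j) = 0 := by
    intro m j hj hj'
    rw [hz, if_neg]
    rw [(hdm m j hj').2]
    omega
  -- step 1: extend the sum to range (M * B)
  have step1 : acorr (M * B) z k =
      ∑ n ∈ Finset.range (M * B), z (n + k) * (starRingEnd ℂ) (z n) := by
    unfold acorr
    apply Finset.sum_subset (Finset.range_subset_range.2 (Nat.sub_le _ _))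
    intro n hn hn'
    rw [Finset.mem_range] at hn hn'
    -- M * B - k ≤ n < M * B, so n = (M-1) * B + j with j ≥ B - k ≥ N
    have hsplit : (M - 1) * B + B = M * B := by
      rw [Nat.sub_mul, one_mul]
      have : B ≤ M * B := Nat.le_mul_of_pos_left B hM
      omega
    have hn2 : (M - 1) * B + (n - (M - 1) * B) = n := by omega
    have hjlt : n - (M - 1) * B < B := by omega
    have hjge : N ≤ n - (M - 1) * B := by omega
    rw [← hn2, hz0 (M - 1) _ hjge hjlt, map_zero, mul_zero]
  -- step 2: split into blocks
  have step2 : ∑ n ∈ Finset.range (M * B), z (n + k) * (starRingEnd ℂ) (z n) =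
      ∑ m ∈ Finset.range M, ∑ j ∈ Finset.range B,
        z (m * B + j + k) * (starRingEnd ℂ) (z (m * B + j)) := by
    rw [Finset.sum_sigma']
    symm
    apply Finset.sum_nbij' (fun p : (_ : ℕ) × ℕ => p.1 * B + p.2)
      (fun n => (⟨n / B, n % B⟩ : (_ : ℕ) × ℕ))
    · rintro ⟨m, j⟩ h
      simp only [Finset.mem_sigma, Finset.mem_range] at h
      rw [Finset.mem_range]
      calc m * B + j < m * B + B := by omega
      _ = (m + 1) * B := by ring
      _ ≤ M * B := Nat.mul_le_mul_right B h.1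
    · intro n hn
      rw [Finset.mem_range] at hn
      simp only [Finset.mem_sigma, Finset.mem_range]
      exact ⟨Nat.div_lt_of_lt_mul (by rw [mul_comm]; exact hn), Nat.mod_lt n hBpos⟩
    · rintro ⟨m, j⟩ h
      simp only [Finset.mem_sigma, Finset.mem_range] at h
      have := hdm m j h.2
      simp only []
      rw [(hdm m j h.2).1, (hdm m j h.2).2]
    · intro n hn
      simp only []
      rw [mul_comm]
      exact Nat.div_add_mod n B
    · rintro ⟨m, j⟩ h
      rfl
  -- step 3: inner sum
  have step3 : ∀ m ∈ Finset.range M,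
      ∑ j ∈ Finset.range B, z (m * B + j + k) * (starRingEnd ℂ) (z (m * B + j)) =
        acorr N (x m) k := by
    intro m hm
    rw [Finset.mem_range] at hm
    rw [← Finset.sum_subset (Finset.range_subset_range.2 (show N - k ≤ B by omega))
      (by
        intro j hj hj'
        rw [Finset.mem_range] at hj hj'
        by_cases hjN : j < N
        · -- then j + k ≥ N, j + k < B
          rw [show m * B + j + k = m * B + (j + k) by ring,
            hz0 m (j + k) (by omega) (by omega), zero_mul]
        · rw [hz0 m j (by omega) hj, map_zero, mul_zero])]
    unfold acorr
    apply Finset.sum_congr rfl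
    intro j hj
    rw [Finset.mem_range] at hj
    rw [show m * B + j + k = m * B + (j + k) by ring,
      hz1 m (j + k) hm (by omega), hz1 m j hm (by omega)]
  rw [step1, step2]
  exact Finset.sum_congr rfl step3

theorem complementary_iff_zero_correlation_zone (M N : ℕ) (hN : 0 < N) (hM : 0 < M)
    (x : ℕ → ℕ → ℂ) (z : ℕ → ℂ)
    (hz : ∀ i, z i = if i % (2 * N - 1) < N ∧ i / (2 * N - 1) < M
        then x (i / (2 * N - 1)) (i % (2 * N - 1)) else 0) :
    (∀ k : ℤ, 1 ≤ |k| → |k| ≤ (N : ℤ) - 1 →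
        ∑ m ∈ Finset.range M, acorrZ N (x m) k = 0) ↔
      (∀ k : ℕ, 1 ≤ k → k ≤ N - 1 → acorr (M * (2 * N - 1)) z k = 0) := by
  constructor
  · intro h k hk1 hk2
    rw [acorr_z_eq_sum M N hN hM x z hz k hk1 hk2]
    have := h (k : ℤ) (by rw [abs_of_nonneg (by positivity)]; exact_mod_cast hk1)
      (by rw [abs_of_nonneg (by positivity)]; push_cast; omega)
    rw [← this]
    exact Finset.sum_congr rfl fun m _ => (acorrZ_natCast N (x m) k).symm
  · intro h k hk1 hk2
    rcases le_or_gt 0 k with hk | hk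
    · obtain ⟨j, rfl⟩ : ∃ j : ℕ, k = (j : ℤ) := ⟨k.toNat, by omega⟩
      have hj1 : 1 ≤ j := by rw [abs_of_nonneg hk] at hk1; exact_mod_cast hk1
      have hj2 : j ≤ N - 1 := by rw [abs_of_nonneg hk] at hk2; omega
      have := h j hj1 hj2
      rw [acorr_z_eq_sum M N hN hM x z hz j hj1 hj2] at this
      rw [← this]
      exact Finset.sum_congr rfl fun m _ => acorrZ_natCast N (x m) j
    · obtain ⟨j, rfl⟩ : ∃ j : ℕ, k = -(j : ℤ) := ⟨(-k).toNat, by omega⟩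
      have hj1 : 1 ≤ j := by rw [abs_of_neg hk] at hk1; omega
      have hj2 : j ≤ N - 1 := by rw [abs_of_neg hk] at hk2; omega
      have heq := h j hj1 hj2
      rw [acorr_z_eq_sum M N hN hM x z hz j hj1 hj2] at heq
      calc ∑ m ∈ Finset.range M, acorrZ N (x m) (-(j : ℤ))
          = ∑ m ∈ Finset.range M, (starRingEnd ℂ) (acorr N (x m) j) :=
            Finset.sum_congr rfl fun m _ => acorrZ_neg_natCast N (x m) j (by omega)
        _ = (starRingEnd ℂ) (∑ m ∈ Finset.range M, acorr N (x m) j) := (map_sum _ _ _).symm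
        _ = 0 := by rw [heq, map_zero]
end

section
/- Let w_k = w_{−k} ≥ 0 for k = 0, …, N−1, let U_k be the N×N shift matrices, and let S_m = [0_{N×(m−1)N}, I_N, 0_{N×(M−m)N}]. Define L = Σ_{i,j=1}^M Σ_{k=1−N}^{N−1} w_k vec(S_j^H U_k S_i) vec(S_j^H U_k S_i)^H. Then mat(L 1) = 1_{M×M} ⊗ W, where W is the N×N symmetric Toeplitz matrix with entries W_{i,j} = w_{|i−j|}(N − |i−j|). -/
open Matrix

lemma count_shift (N : ℕ) (k : ℤ) (hk : k.natAbs < N) :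
    (∑ r : Fin N, ∑ s : Fin N, (if (s:ℤ) - (r:ℤ) = k then (1:ℂ) else 0))
      = ((N - k.natAbs : ℕ) : ℂ) := by
  have h1 : ∀ r : Fin N, (∑ s : Fin N, (if (s:ℤ) - (r:ℤ) = k then (1:ℂ) else 0))
      = if 0 ≤ (r:ℤ) + k ∧ (r:ℤ) + k < N then 1 else 0 := by
    intro r
    by_cases h : 0 ≤ (r:ℤ) + k ∧ (r:ℤ) + k < N
    · rw [if_pos h]
      obtain ⟨h0, h1⟩ := h
      have hlt : ((r:ℤ) + k).toNat < N := by omega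
      rw [Finset.sum_eq_single (⟨((r:ℤ)+k).toNat, hlt⟩ : Fin N)]
      · simp; omega
      · intro b _ hb
        rw [if_neg]
        intro hc
        apply hb
        apply Fin.ext
        simp
        omega
      · simp
    · rw [if_neg h]
      apply Finset.sum_eq_zero
      intro s _
      rw [if_neg]
      intro hc
      have := s.isLt
      push_neg at h
      omega
  rw [Finset.sum_congr rfl (fun r _ => h1 r)]
  have h2 : (∑ r : Fin N, if 0 ≤ (r:ℤ) + k ∧ (r:ℤ) + k < N then (1:ℂ) else 0)
      = ∑ r ∈ Finset.range N, if 0 ≤ (r:ℤ) + k ∧ (r:ℤ) + k < N then (1:ℂ) else 0 := by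
    rw [Finset.sum_range fun i => if 0 ≤ (i:ℤ) + k ∧ (i:ℤ) + k < N then (1:ℂ) else 0]
  rw [h2, Finset.sum_boole]
  norm_num
  rcases le_or_gt 0 k with hk0 | hk0
  · have : ((Finset.range N).filter (fun r : ℕ => 0 ≤ (r:ℤ) + k ∧ (r:ℤ) + k < N))
        = Finset.range (N - k.natAbs) := by
      ext r; simp only [Finset.mem_filter, Finset.mem_range]; omega
    rw [this]; simp
  · have : ((Finset.range N).filter (fun r : ℕ => 0 ≤ (r:ℤ) + k ∧ (r:ℤ) + k < N))
        = Finset.Ico k.natAbs N := by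
      ext r; simp only [Finset.mem_filter, Finset.mem_range, Finset.mem_Ico]; omega
    rw [this]; simp

lemma block_iff (N j r a : ℕ) (hN : 0 < N) (hr : r < N) :
    a = j*N + r ↔ (a/N = j ∧ a%N = r) := by
  constructor
  · rintro rfl
    rw [mul_comm, Nat.mul_add_div hN, Nat.mul_add_mod]
    rw [Nat.div_eq_of_lt hr, Nat.mod_eq_of_lt hr]
    simp
  · rintro ⟨rfl, rfl⟩
    rw [mul_comm]
    exact (Nat.div_add_mod a N).symm

lemma entry_eq (M N : ℕ) (hN : 0 < N) (k : ℤ) (i j : Fin M) (a b : Fin (M*N)) :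
    (((Matrix.of fun (r : Fin N) (c : Fin (M*N)) => if (c:ℕ) = (j:ℕ)*N + (r:ℕ) then (1:ℂ) else 0))ᴴ *
     (Matrix.of fun (r s : Fin N) => if (s:ℤ)-(r:ℤ)=k then (1:ℂ) else 0) *
     (Matrix.of fun (r : Fin N) (c : Fin (M*N)) => if (c:ℕ) = (i:ℕ)*N + (r:ℕ) then (1:ℂ) else 0)) a b
    = if ((a:ℕ)/N = (j:ℕ) ∧ (b:ℕ)/N = (i:ℕ) ∧ (((b:ℕ)%N : ℤ) - ((a:ℕ)%N : ℤ) = k))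
      then 1 else 0 := by
  simp only [mul_apply, conjTranspose_apply, of_apply, apply_ite (star : ℂ → ℂ),
    star_one, star_zero]
  have hb : (b:ℕ) % N < N := Nat.mod_lt _ hN
  have ha : (a:ℕ) % N < N := Nat.mod_lt _ hN
  rw [Finset.sum_eq_single (⟨(b:ℕ)%N, hb⟩ : Fin N)]
  · rw [Finset.sum_eq_single (⟨(a:ℕ)%N, ha⟩ : Fin N)]
    · simp only [Fin.val_mk]
      simp only [block_iff N (j:ℕ) ((a:ℕ)%N) (a:ℕ) hN ha,
        block_iff N (i:ℕ) ((b:ℕ)%N) (b:ℕ) hN hb, Int.natCast_mod, and_true]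
      split_ifs <;> simp_all
    · intro r _ hr
      have hc : ¬ ((a:ℕ) = (j:ℕ)*N + (r:ℕ)) := fun hc =>
        hr (Fin.ext (((block_iff N j r a hN r.isLt).mp hc).2.symm))
      rw [if_neg hc, zero_mul]
    · simp
  · intro s _ hs
    have hc : ¬ ((b:ℕ) = (i:ℕ)*N + (s:ℕ)) := fun hc =>
      hs (Fin.ext (((block_iff N i s b hN s.isLt).mp hc).2.symm))
    rw [if_neg hc, mul_zero]
  · simp

lemma sum_fin_mul (M N : ℕ) (hN : 0 < N) (f : ℕ → ℕ → ℂ) :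
    (∑ x : Fin (M*N), f ((x:ℕ)/N) ((x:ℕ)%N)) = ∑ q : Fin M, ∑ r : Fin N, f q r := by
  rw [← Equiv.sum_comp (finProdFinEquiv : Fin M × Fin N ≃ Fin (M*N))
    (fun x : Fin (M*N) => f ((x:ℕ)/N) ((x:ℕ)%N)), Fintype.sum_prod_type]
  apply Finset.sum_congr rfl; intro q _
  apply Finset.sum_congr rfl; intro r _
  have h : ((finProdFinEquiv (q, r) : Fin (M*N)) : ℕ) = (r:ℕ) + N * (q:ℕ) := by
    simp [finProdFinEquiv]
  rw [h, mul_comm N (q:ℕ), Nat.add_mul_div_right _ _ hN, Nat.add_mul_mod_self_right,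
    Nat.div_eq_of_lt r.isLt, Nat.mod_eq_of_lt r.isLt, zero_add]

lemma sum_star_entries (M N : ℕ) (hN : 0 < N) (k : ℤ) (hk : k.natAbs < N) (i j : Fin M) :
    (∑ x : Fin (M*N), ∑ y : Fin (M*N),
      (if ((x:ℕ)/N = (j:ℕ) ∧ (y:ℕ)/N = (i:ℕ) ∧ (((y:ℕ)%N:ℤ) - ((x:ℕ)%N:ℤ) = k))
        then (1:ℂ) else 0))
    = ((N - k.natAbs : ℕ) : ℂ) := by
  simp only [← Int.natCast_mod]
  rw [sum_fin_mul M N hN (fun xq xr => ∑ y : Fin (M*N),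
    (if (xq = (j:ℕ) ∧ (y:ℕ)/N = (i:ℕ) ∧ (((((y:ℕ)%N : ℕ)):ℤ) - (xr:ℤ) = k)) then (1:ℂ) else 0))]
  have h1 : ∀ (q : Fin M) (r : Fin N),
      (∑ y : Fin (M*N), (if ((q:ℕ) = (j:ℕ) ∧ (y:ℕ)/N = (i:ℕ) ∧ (((((y:ℕ)%N : ℕ)):ℤ) - ((r:ℕ):ℤ) = k))
        then (1:ℂ) else 0))
      = ∑ q' : Fin M, ∑ s : Fin N,
        (if ((q:ℕ) = (j:ℕ) ∧ (q':ℕ) = (i:ℕ) ∧ ((s:ℤ) - ((r:ℕ):ℤ) = k)) then (1:ℂ) else 0) := by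
    intro q r
    rw [sum_fin_mul M N hN (fun yq yr =>
      (if ((q:ℕ) = (j:ℕ) ∧ yq = (i:ℕ) ∧ ((yr:ℤ) - ((r:ℕ):ℤ) = k)) then (1:ℂ) else 0))]
  rw [Finset.sum_congr rfl (fun q _ => Finset.sum_congr rfl (fun r _ => h1 q r))]
  rw [Finset.sum_eq_single j]
  · have h2 : ∀ r : Fin N,
        (∑ q' : Fin M, ∑ s : Fin N,
          (if ((j:ℕ) = (j:ℕ) ∧ (q':ℕ) = (i:ℕ) ∧ ((s:ℤ) - ((r:ℕ):ℤ) = k)) then (1:ℂ) else 0))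
        = ∑ s : Fin N, (if ((s:ℤ) - ((r:ℕ):ℤ) = k) then (1:ℂ) else 0) := by
      intro r
      rw [Finset.sum_eq_single i]
      · apply Finset.sum_congr rfl
        intro s _
        simp
      · intro q' _ hq'
        apply Finset.sum_eq_zero
        intro s _
        rw [if_neg]
        exact fun hc => hq' (Fin.ext hc.2.1)
      · simp
    rw [Finset.sum_congr rfl (fun r _ => h2 r)]
    exact count_shift N k hk
  · intro q _ hq
    apply Finset.sum_eq_zero
    intro r _
    apply Finset.sum_eq_zero
    intro q' _
    apply Finset.sum_eq_zero
    intro s _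
    rw [if_neg]
    exact fun hc => hq (Fin.ext hc.1)
  · simp

theorem matL_allones_eq_kron (M N : ℕ) (hM : 0 < M) (hN : 0 < N)
    (w : ℕ → ℝ) (hw : ∀ k, 0 ≤ w k) :
    -- shift matrices (U_k)_{i,j} = 1 iff j - i = k
    let U : ℤ → Matrix (Fin N) (Fin N) ℂ :=
      fun k => Matrix.of fun i j => if (j : ℤ) - (i : ℤ) = k then 1 else 0
    -- block selection matrices S_m = [0, …, I_N, …, 0]
    let S : Fin M → Matrix (Fin N) (Fin (M * N)) ℂ :=
      fun m => Matrix.of fun i j => if (j : ℕ) = (m : ℕ) * N + (i : ℕ) then 1 else 0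
    -- vec stacks the columns of a matrix
    let vec : Matrix (Fin (M * N)) (Fin (M * N)) ℂ → (Fin (M * N) × Fin (M * N) → ℂ) :=
      fun A p => A p.2 p.1
    let L : Matrix (Fin (M * N) × Fin (M * N)) (Fin (M * N) × Fin (M * N)) ℂ :=
      ∑ i : Fin M, ∑ j : Fin M, ∑ k ∈ Finset.Icc (1 - (N : ℤ)) ((N : ℤ) - 1),
        (w k.natAbs : ℂ) •
          Matrix.vecMulVec (vec ((S j)ᴴ * U k * S i)) (star (vec ((S j)ᴴ * U k * S i)))
    -- W_{i,j} = w_{|i-j|} (N - |i-j|)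
    let W : Matrix (Fin N) (Fin N) ℂ :=
      Matrix.of fun i j =>
        (w ((i : ℤ) - (j : ℤ)).natAbs : ℂ) * ((N : ℂ) - (((i : ℤ) - (j : ℤ)).natAbs : ℂ))
    -- mat(L·1) = 1_{M×M} ⊗ W, stated entrywise: mat(v)_{a,b} = v(b,a)
    ∀ a b : Fin (M * N),
      (L *ᵥ fun _ => (1 : ℂ)) (b, a) =
        W ⟨(a : ℕ) % N, Nat.mod_lt _ hN⟩ ⟨(b : ℕ) % N, Nat.mod_lt _ hN⟩ := by
  intro U S vec L W a b
  have hadiv : (a:ℕ)/N < M := (Nat.div_lt_iff_lt_mul hN).mpr a.isLt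
  have hbdiv : (b:ℕ)/N < M := (Nat.div_lt_iff_lt_mul hN).mpr b.isLt
  have hamod : (a:ℕ) % N < N := Nat.mod_lt _ hN
  have hbmod : (b:ℕ) % N < N := Nat.mod_lt _ hN
  set k₀ : ℤ := ((b:ℕ)%N : ℤ) - ((a:ℕ)%N : ℤ) with hk₀
  have hk₀abs : k₀.natAbs < N := by omega
  simp only [L, U, S, vec, mulVec, dotProduct, mul_one, Matrix.sum_apply,
    Finset.sum_apply, Matrix.smul_apply, vecMulVec_apply, smul_eq_mul,
    Pi.star_apply, entry_eq M N hN, apply_ite (star : ℂ → ℂ), star_one, star_zero]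
  rw [Finset.sum_comm]
  have step1 : ∀ i : Fin M,
      (∑ p : Fin (M*N) × Fin (M*N), ∑ j : Fin M,
        ∑ k ∈ Finset.Icc (1 - (N:ℤ)) ((N:ℤ) - 1),
        (w k.natAbs : ℂ) *
          ((if ((a:ℕ)/N = (j:ℕ) ∧ (b:ℕ)/N = (i:ℕ) ∧ (((b:ℕ)%N : ℤ) - ((a:ℕ)%N : ℤ) = k))
            then 1 else 0) *
           (if ((p.2:ℕ)/N = (j:ℕ) ∧ (p.1:ℕ)/N = (i:ℕ) ∧ (((p.1:ℕ)%N : ℤ) - ((p.2:ℕ)%N : ℤ) = k))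
            then 1 else 0)))
      = ∑ j : Fin M, ∑ k ∈ Finset.Icc (1 - (N:ℤ)) ((N:ℤ) - 1),
        (w k.natAbs : ℂ) *
          ((if ((a:ℕ)/N = (j:ℕ) ∧ (b:ℕ)/N = (i:ℕ) ∧ (((b:ℕ)%N : ℤ) - ((a:ℕ)%N : ℤ) = k))
            then 1 else 0) * ((N - k.natAbs : ℕ) : ℂ)) := by
    intro i
    rw [Finset.sum_comm]
    apply Finset.sum_congr rfl
    intro j _
    rw [Finset.sum_comm]
    apply Finset.sum_congr rfl
    intro k hk
    have hkabs : k.natAbs < N := by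
      simp only [Finset.mem_Icc] at hk
      omega
    simp only [← mul_assoc]
    rw [← Finset.mul_sum, Fintype.sum_prod_type, Finset.sum_comm,
      sum_star_entries M N hN k hkabs i j, mul_assoc]
  rw [Finset.sum_congr rfl (fun i _ => step1 i)]
  rw [Finset.sum_eq_single (⟨(b:ℕ)/N, hbdiv⟩ : Fin M)]
  · rw [Finset.sum_eq_single (⟨(a:ℕ)/N, hadiv⟩ : Fin M)]
    · rw [Finset.sum_eq_single_of_mem k₀ (by simp only [Finset.mem_Icc]; omega)]
      · rw [if_pos ⟨rfl, rfl, rfl⟩]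
        simp only [W, Matrix.of_apply, Fin.val_mk]
        have hW : (((((a:ℕ) % N : ℕ)) : ℤ) - ((((b:ℕ) % N : ℕ)) : ℤ)).natAbs
            = k₀.natAbs := by omega
        rw [hW, Nat.cast_sub (le_of_lt hk₀abs)]
        push_cast
        ring
      · intro k _ hkne
        rw [if_neg (fun hc => hkne (by rw [hk₀]; exact hc.2.2.symm))]
        ring
    · intro j _ hj
      apply Finset.sum_eq_zero
      intro k _
      rw [if_neg (fun hc => hj (Fin.ext hc.1.symm))]
      ring
    · simp
  · intro i _ hi
    apply Finset.sum_eq_zero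
    intro j _
    apply Finset.sum_eq_zero
    intro k _
    rw [if_neg (fun hc => hi (Fin.ext hc.2.1.symm))]
    ring
  · simp
end

section
/- Let X ∈ ℂ^{N×M}, let U_k be the N×N shift matrices, and let h_p = (1, e^{jω_p}, …, e^{jω_p(N−1)})ᵀ with ω_p = 2π(p−1)/(2N) for p = 1,…,2N. Then Σ_{k=1−N}^{N−1} ‖X^H U_k X‖_F² = (1/(2N)) Σ_{p=1}^{2N} ‖X^H h_p‖₂⁴. -/
/-!
The `(i, j)` entries of `Xᴴ U_k X`, as `k` runs over the lags, form the cross-correlation of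
columns `i` and `j` of `X`; its generating function evaluated at `ζ⁻ᵖ`, with `ζ` a primitive
`2N`-th root of unity, factors as `(Xᴴ h_p)ᵢ · conj (Xᴴ h_p)ⱼ`. The `2N - 1` lags are distinct
modulo `2N`, so Parseval's identity for the `2N`-point discrete Fourier transform turns
`∑ₖ |(Xᴴ U_k X)ᵢⱼ|²` into `(1/2N) ∑ₚ |(Xᴴ h_p)ᵢ|² |(Xᴴ h_p)ⱼ|²`; summing over `i, j` gives the claim.
-/

open ComplexConjugate

theorem IsPrimitiveRoot.sum_pow_zpow_eq_ite {K : Type*} [Field K] {ζ : K} {L : ℕ}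
    (hζ : IsPrimitiveRoot ζ L) (s : ℤ) :
    ∑ p : Fin L, (ζ ^ (p : ℕ)) ^ s = if (L : ℤ) ∣ s then (L : K) else 0 := by
  have hswap : ∀ p : ℕ, (ζ ^ p) ^ s = (ζ ^ s) ^ p := fun p => by
    rw [← zpow_natCast, ← zpow_natCast, ← zpow_mul, ← zpow_mul, mul_comm]
  simp only [hswap, Fin.sum_univ_eq_sum_range (fun p => (ζ ^ s) ^ p)]
  split_ifs with hdvd
  · simp [(hζ.zpow_eq_one_iff_dvd s).2 hdvd]
  · have hne : ζ ^ s ≠ 1 := fun h => hdvd ((hζ.zpow_eq_one_iff_dvd s).1 h)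
    rw [geom_sum_eq hne, ← hswap, hζ.pow_eq_one, one_zpow, sub_self, zero_div]

/-- Parseval's identity for the length-`L` discrete Fourier transform of a sequence supported
on integers that are pairwise distinct modulo `L`. -/
theorem IsPrimitiveRoot.sum_sq_norm_sum_mul_zpow {ζ : ℂ} {L : ℕ} (hζ : IsPrimitiveRoot ζ L)
    {S : Finset ℤ} (hS : Set.InjOn ((↑) : ℤ → ZMod L) S) (f : ℤ → ℂ) :
    ∑ p : Fin L, ‖∑ k ∈ S, f k * (ζ ^ (p : ℕ)) ^ k‖ ^ 2 = L * ∑ k ∈ S, ‖f k‖ ^ 2 := by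
  rcases Nat.eq_zero_or_pos L with rfl | hL
  · simp
  have hconj : ∀ (p : ℕ) (l : ℤ), conj ((ζ ^ p) ^ l) = (ζ ^ p) ^ (-l) := fun p l => by
    rw [zpow_neg, Complex.inv_eq_conj (by simp [hζ.norm'_eq_one hL.ne'])]
  have hexpand : ∀ p : ℕ, (‖∑ k ∈ S, f k * (ζ ^ p) ^ k‖ : ℂ) ^ 2
      = ∑ k ∈ S, ∑ l ∈ S, f k * conj (f l) * (ζ ^ p) ^ (k - l) := fun p => by
    rw [← Complex.mul_conj', map_sum, Finset.sum_mul_sum]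
    refine Finset.sum_congr rfl fun k _ => Finset.sum_congr rfl fun l _ => ?_
    rw [map_mul, hconj, sub_eq_add_neg, zpow_add₀ (pow_ne_zero _ (hζ.ne_zero hL.ne'))]
    ring
  apply Complex.ofReal_injective
  push_cast
  calc ∑ p : Fin L, ((‖∑ k ∈ S, f k * (ζ ^ (p : ℕ)) ^ k‖ : ℂ) ^ 2)
      = ∑ k ∈ S, ∑ l ∈ S, f k * conj (f l) * ∑ p : Fin L, (ζ ^ (p : ℕ)) ^ (k - l) := by
        simp only [hexpand, Finset.mul_sum]
        rw [Finset.sum_comm]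
        exact Finset.sum_congr rfl fun k _ => Finset.sum_comm
    _ = ∑ k ∈ S, f k * conj (f k) * L := by
        refine Finset.sum_congr rfl fun k hk => ?_
        rw [Finset.sum_eq_single_of_mem k hk fun l hl hlk => ?_]
        · simp
        · have hkl : ¬ (L : ℤ) ∣ k - l := fun h =>
            hlk (hS hl hk ((ZMod.intCast_eq_intCast_iff_dvd_sub l k L).2 h))
          rw [hζ.sum_pow_zpow_eq_ite, if_neg hkl, mul_zero]
    _ = L * ∑ k ∈ S, (‖f k‖ : ℂ) ^ 2 := by
        simp only [Complex.mul_conj', Finset.mul_sum, mul_comm]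

theorem ZMod.intCast_injOn_Icc {L : ℕ} {a b : ℤ} (hab : b - a < L) :
    Set.InjOn ((↑) : ℤ → ZMod L) (Finset.Icc a b) := by
  intro k hk l hl hkl
  have hdvd := (ZMod.intCast_eq_intCast_iff_dvd_sub k l L).1 hkl
  simp only [Finset.coe_Icc, Set.mem_Icc] at hk hl
  have := Int.eq_zero_of_abs_lt_dvd hdvd (abs_lt.2 ⟨by omega, by omega⟩)
  omega

theorem Finset.sum_sum_sum_mul_eq_sum_sq {R ι κ : Type*} [CommSemiring R] [Fintype ι]
    [Fintype κ] (f : κ → ι → R) :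
    ∑ i, ∑ j, ∑ p, f p i * f p j = ∑ p, (∑ i, f p i) ^ 2 := by
  simp only [sq, Finset.sum_mul_sum]
  symm
  rw [Finset.sum_comm]
  exact Finset.sum_congr rfl fun i _ => Finset.sum_comm

def shiftMatrix (R : Type*) [Zero R] [One R] (N : ℕ) (k : ℤ) : Matrix (Fin N) (Fin N) R :=
  Matrix.of fun i j => if (j : ℤ) - i = k then 1 else 0

open scoped Matrix

section Correlation

variable {R ι : Type*} {N : ℕ}

theorem conjTranspose_mul_shiftMatrix_mul_apply [Semiring R] [Star R]
    (X : Matrix (Fin N) ι R) (k : ℤ) (i j : ι) :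
    (Xᴴ * shiftMatrix R N k * X) i j
      = ∑ a : Fin N, ∑ b : Fin N, if (b : ℤ) - a = k then star (X a i) * X b j else 0 := by
  simp only [Matrix.mul_apply, Matrix.conjTranspose_apply, shiftMatrix, Matrix.of_apply,
    Finset.sum_mul, mul_ite, ite_mul, mul_one, mul_zero, zero_mul]
  exact Finset.sum_comm

theorem sum_Icc_conjTranspose_mul_shiftMatrix_mul_apply_mul [CommSemiring R] [Star R]
    (X : Matrix (Fin N) ι R) (g : ℤ → R) (i j : ι) :
    ∑ k ∈ Finset.Icc (1 - (N : ℤ)) (N - 1), (Xᴴ * shiftMatrix R N k * X) i j * g k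
      = ∑ a : Fin N, ∑ b : Fin N, star (X a i) * X b j * g ((b : ℤ) - a) := by
  simp only [conjTranspose_mul_shiftMatrix_mul_apply, Finset.sum_mul, ite_mul, zero_mul]
  rw [Finset.sum_comm]
  refine Finset.sum_congr rfl fun a _ => ?_
  rw [Finset.sum_comm]
  refine Finset.sum_congr rfl fun b _ => ?_
  rw [Finset.sum_ite_eq, if_pos]
  simp only [Finset.mem_Icc]
  omega

theorem sum_Icc_conjTranspose_mul_shiftMatrix_mul_apply_mul_inv_zpow
    (X : Matrix (Fin N) ι ℂ) {ζ : ℂ} (hζ : ‖ζ‖ = 1) (i j : ι) :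
    ∑ k ∈ Finset.Icc (1 - (N : ℤ)) (N - 1), (Xᴴ * shiftMatrix ℂ N k * X) i j * ζ⁻¹ ^ k
      = (Xᴴ *ᵥ fun n => ζ ^ (n : ℕ)) i * conj ((Xᴴ *ᵥ fun n => ζ ^ (n : ℕ)) j) := by
  have hζ0 : ζ ≠ 0 := norm_ne_zero_iff.1 (by simp [hζ])
  rw [sum_Icc_conjTranspose_mul_shiftMatrix_mul_apply_mul]
  simp only [Matrix.mulVec, dotProduct, Matrix.conjTranspose_apply, map_sum, map_mul,
    Finset.sum_mul_sum]
  refine Finset.sum_congr rfl fun a _ => Finset.sum_congr rfl fun b _ => ?_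
  rw [Complex.star_def, Complex.conj_conj, map_pow, ← Complex.inv_eq_conj hζ, inv_zpow',
    neg_sub, zpow_sub₀ hζ0, zpow_natCast, zpow_natCast, div_eq_mul_inv, inv_pow]
  ring

theorem sum_Icc_sq_norm_conjTranspose_mul_shiftMatrix_mul_apply {ζ : ℂ} {L : ℕ}
    (hζ : IsPrimitiveRoot ζ L) (hL0 : L ≠ 0) (hL : 2 * N - 1 ≤ L)
    (X : Matrix (Fin N) ι ℂ) (i j : ι) :
    ∑ k ∈ Finset.Icc (1 - (N : ℤ)) (N - 1), ‖(Xᴴ * shiftMatrix ℂ N k * X) i j‖ ^ 2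
      = (1 / L : ℝ) * ∑ p : Fin L, ‖(Xᴴ *ᵥ fun n => (ζ ^ (p : ℕ)) ^ (n : ℕ)) i‖ ^ 2 *
          ‖(Xᴴ *ᵥ fun n => (ζ ^ (p : ℕ)) ^ (n : ℕ)) j‖ ^ 2 := by
  have hnorm : ∀ p : ℕ, ‖ζ ^ p‖ = 1 := fun p => by
    rw [norm_pow, hζ.norm'_eq_one hL0, one_pow]
  have hparseval := hζ.inv.sum_sq_norm_sum_mul_zpow
    (ZMod.intCast_injOn_Icc (L := L) (a := 1 - (N : ℤ)) (b := N - 1) (by omega))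
    fun k => (Xᴴ * shiftMatrix ℂ N k * X) i j
  simp only [inv_pow, sum_Icc_conjTranspose_mul_shiftMatrix_mul_apply_mul_inv_zpow _ (hnorm _),
    norm_mul, Complex.norm_conj, mul_pow] at hparseval
  rw [hparseval]
  field_simp

end Correlation

open Matrix Complex

theorem frobenius_corr_sum_eq_fourth_moment (M N : ℕ) (hN : 0 < N)
    (X : Matrix (Fin N) (Fin M) ℂ)
    (U : ℤ → Matrix (Fin N) (Fin N) ℂ)
    (hU : ∀ (k : ℤ) (i j : Fin N), U k i j = if (j : ℤ) - (i : ℤ) = k then 1 else 0)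
    (h : Fin (2 * N) → Fin N → ℂ)
    (hh : ∀ (p : Fin (2 * N)) (n : Fin N),
      h p n = Complex.exp (Complex.I * (2 * Real.pi * (p : ℕ) / (2 * N)) * (n : ℕ))) :
    ∑ k ∈ Finset.Icc (1 - (N : ℤ)) ((N : ℤ) - 1),
        (∑ i : Fin M, ∑ j : Fin M, ‖(Xᴴ * U k * X) i j‖ ^ 2) =
      (1 / (2 * N) : ℝ) *
        ∑ p : Fin (2 * N), (∑ m : Fin M, ‖(Xᴴ *ᵥ h p) m‖ ^ 2) ^ 2 := by
  set ζ := exp (2 * Real.pi * I / (2 * N : ℕ))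
  have hζ : IsPrimitiveRoot ζ (2 * N) := isPrimitiveRoot_exp _ (by omega)
  have hU' : U = shiftMatrix ℂ N := funext fun k => Matrix.ext (hU k)
  have hh' : h = fun (p : Fin (2 * N)) (n : Fin N) => (ζ ^ (p : ℕ)) ^ (n : ℕ) := by
    ext p n
    rw [hh, ← exp_nat_mul, ← exp_nat_mul]
    push_cast
    ring_nf
  subst hU' hh'
  calc _ = ∑ i : Fin M, ∑ j : Fin M, ∑ k ∈ Finset.Icc (1 - (N : ℤ)) (N - 1),
          ‖(Xᴴ * shiftMatrix ℂ N k * X) i j‖ ^ 2 := by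
        rw [Finset.sum_comm]
        exact Finset.sum_congr rfl fun i _ => Finset.sum_comm
    _ = _ := by
        simp only [sum_Icc_sq_norm_conjTranspose_mul_shiftMatrix_mul_apply hζ (by omega)
          (Nat.sub_le _ _), ← Finset.mul_sum, Finset.sum_sum_sum_mul_eq_sum_sq, Nat.cast_mul,
          Nat.cast_ofNat]
end
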